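/- Let A : ℝ^N → ℝ^N be continuous, let ρ : ℝ^N → ℝ be C¹, set A' := A + ∇ρ, and let ℏ ∈ (0,1], f ∈ 𝒮(ℝ^N × ℝ^N). Then the magnetic Weyl quantization is gauge covariant: for every u ∈ L²(ℝ^N), Op^{A'}_ℏ(f) u = e^{(i/ℏ)ρ} · ( Op^A_ℏ(f) ( e^{-(i/ℏ)ρ} u ) ), i.e. Op^{A'}_ℏ(f) = e^{(i/ℏ)ρ} Op^A_ℏ(f) e^{-(i/ℏ)ρ} as operators on L²(ℝ^N), where e^{±(i/ℏ)ρ} denote the unitary multiplication operators by x ↦ e^{±(i/ℏ)ρ(x)}. -/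

import Mathlib

open MeasureTheory Filter Topology Real

noncomputable section

abbrev Vec (N : ℕ) := Fin N → ℝ

/-- Circulation `Γ^A[x,y]` of the vector potential `A` along the segment from `x` to `y`. -/
def circA {N : ℕ} (A : Vec N → Vec N) (x y : Vec N) : ℝ :=
  ∫ s in (0:ℝ)..1, ∑ j, (y j - x j) * A (x + s • (y - x)) j

/-- Flux `Γ^B⟨a,b,c⟩` of the magnetic field `B` through the triangle with vertices
`a`, `b`, `c`, given by the standard parametrization. -/
def fluxB {N : ℕ} (B : Fin N → Fin N → Vec N → ℝ) (a b c : Vec N) : ℝ :=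
  ∑ j, ∑ k, (b j - a j) * (c k - b k) *
    ∫ μ in (0:ℝ)..1, ∫ ν in (0:ℝ)..1, μ * B j k (a + μ • (b - a) + (μ * ν) • (c - b))

/-- The magnetic Weyl quantization `Op^A_ℏ(f)` applied to `u`, as a function on `ℝ^N`. -/
def opA {N : ℕ} (A : Vec N → Vec N) (ℏ : ℝ) (f : Vec N × Vec N → ℂ) (u : Vec N → ℂ) :
    Vec N → ℂ :=
  fun x => (((2*π*ℏ)^N : ℝ) : ℂ)⁻¹ * ∫ y : Vec N, ∫ η : Vec N,
    Complex.exp (Complex.I / (ℏ:ℂ) * ((∑ j, (x j - y j) * η j : ℝ) : ℂ)) *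
    Complex.exp (-(Complex.I / (ℏ:ℂ)) * ((circA A x y : ℝ) : ℂ)) *
    f ((2:ℝ)⁻¹ • (x + y), η) * u y

/-! Since `Γ^{A+∇ρ}[x,y] = Γ^A[x,y] + ρ y - ρ x` by the fundamental theorem of calculus along the
segment, the phase `e^{-(i/ℏ)Γ^{A+∇ρ}[x,y]}` in the kernel of `Op^{A+∇ρ}_ℏ(f)` splits off the
factors `e^{(i/ℏ)ρ x}` and `e^{-(i/ℏ)ρ y}`, which are the two multiplication operators. -/

lemma sum_mul_apply_single {ι : Type*} [Fintype ι] [DecidableEq ι]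
    (L : (ι → ℝ) →L[ℝ] ℝ) (v : ι → ℝ) :
    ∑ j, v j * L (Pi.single j 1) = L v := by
  conv_rhs => rw [← Finset.univ_sum_single v]
  simp only [map_sum]
  refine Finset.sum_congr rfl fun j _ => ?_
  rw [← smul_eq_mul, ← map_smul, ← Pi.single_smul, smul_eq_mul, mul_one]

lemma integral_fderiv_segment {E F : Type*} [NormedAddCommGroup E] [NormedSpace ℝ E]
    [NormedAddCommGroup F] [NormedSpace ℝ F] [CompleteSpace F]
    {ρ : E → F} (hρ : ContDiff ℝ 1 ρ) (x y : E) :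
    ∫ s in (0:ℝ)..1, fderiv ℝ ρ (x + s • (y - x)) (y - x) = ρ y - ρ x := by
  have hsegment (s : ℝ) : HasDerivAt (fun t : ℝ => x + t • (y - x)) (y - x) s := by
    simpa using ((hasDerivAt_id s).smul_const (y - x)).const_add x
  have hderiv (s : ℝ) : HasDerivAt (fun t : ℝ => ρ (x + t • (y - x)))
      (fderiv ℝ ρ (x + s • (y - x)) (y - x)) s :=
    ((hρ.differentiable one_ne_zero) _).hasFDerivAt.comp_hasDerivAt s (hsegment s)
  have hcont : Continuous fun s : ℝ => fderiv ℝ ρ (x + s • (y - x)) (y - x) :=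
    ((hρ.continuous_fderiv one_ne_zero).comp (by fun_prop)).clm_apply continuous_const
  simpa using intervalIntegral.integral_eq_sub_of_hasDerivAt (fun s _ => hderiv s)
    (hcont.intervalIntegrable 0 1)

section Circulation

variable {N : ℕ}

lemma continuous_circA_integrand {A : Vec N → Vec N} (hA : Continuous A) (x y : Vec N) :
    Continuous fun s : ℝ => ∑ j, (y j - x j) * A (x + s • (y - x)) j := by
  fun_prop

lemma circA_add {A B : Vec N → Vec N} (hA : Continuous A) (hB : Continuous B) (x y : Vec N) :
    circA (fun z => A z + B z) x y = circA A x y + circA B x y := by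
  simp only [circA, Pi.add_apply, mul_add, Finset.sum_add_distrib]
  exact intervalIntegral.integral_add ((continuous_circA_integrand hA x y).intervalIntegrable 0 1)
    ((continuous_circA_integrand hB x y).intervalIntegrable 0 1)

lemma continuous_gradient {ρ : Vec N → ℝ} (hρ : ContDiff ℝ 1 ρ) :
    Continuous fun z (j : Fin N) => fderiv ℝ ρ z (Pi.single j 1) :=
  continuous_pi fun _ => (hρ.continuous_fderiv one_ne_zero).clm_apply continuous_const

lemma circA_gradient {ρ : Vec N → ℝ} (hρ : ContDiff ℝ 1 ρ) (x y : Vec N) :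
    circA (fun z j => fderiv ℝ ρ z (Pi.single j 1)) x y = ρ y - ρ x := by
  simp only [circA, sum_mul_apply_single]
  exact integral_fderiv_segment hρ x y

lemma circA_add_gradient {A : Vec N → Vec N} (hA : Continuous A)
    {ρ : Vec N → ℝ} (hρ : ContDiff ℝ 1 ρ) (x y : Vec N) :
    circA (fun z => A z + fun j => fderiv ℝ ρ z (Pi.single j 1)) x y
      = circA A x y + (ρ y - ρ x) := by
  rw [circA_add hA (continuous_gradient hρ), circA_gradient hρ]

end Circulation

lemma exp_neg_mul_add_sub (c : ℂ) (γ a b : ℝ) :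
    Complex.exp (-c * ((γ + (b - a) : ℝ) : ℂ))
      = Complex.exp (c * a) * Complex.exp (-c * γ) * Complex.exp (-c * b) := by
  rw [← Complex.exp_add, ← Complex.exp_add]
  push_cast
  ring_nf

theorem gauge_covariance_general {N : ℕ} (A : Vec N → Vec N) (hA : Continuous A)
    (ρ : Vec N → ℝ) (hρ : ContDiff ℝ 1 ρ)
    (ℏ : ℝ) (f : SchwartzMap (Vec N × Vec N) ℂ)
    (u : Vec N → ℂ) (x : Vec N) :
    opA (fun y => A y + fun j => fderiv ℝ ρ y (Pi.single j 1)) ℏ ⇑f u x =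
      Complex.exp (Complex.I/(ℏ:ℂ) * ((ρ x : ℝ) : ℂ)) *
        opA A ℏ ⇑f (fun y => Complex.exp (-(Complex.I/(ℏ:ℂ)) * ((ρ y : ℝ) : ℂ)) * u y) x := by
  simp only [opA, circA_add_gradient hA hρ x, exp_neg_mul_add_sub]
  rw [mul_left_comm]
  congr 1
  rw [← integral_const_mul]
  congr 1; funext y
  rw [← integral_const_mul]
  congr 1; funext η
  ring

/-- Gauge covariance of the magnetic Weyl quantization:
`Op^{A+∇ρ}_ℏ(f) = e^{(i/ℏ)ρ} Op^A_ℏ(f) e^{-(i/ℏ)ρ}`. -/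
theorem gauge_covariance {N : ℕ} (A : Vec N → Vec N) (hA : Continuous A)
    (ρ : Vec N → ℝ) (hρ : ContDiff ℝ 1 ρ)
    (ℏ : ℝ) (hℏ : ℏ ∈ Set.Ioc (0:ℝ) 1) (f : SchwartzMap (Vec N × Vec N) ℂ)
    (u : Vec N → ℂ) (hu : MemLp u 2 (volume : Measure (Vec N))) (x : Vec N) :
    opA (fun y => A y + fun j => fderiv ℝ ρ y (Pi.single j 1)) ℏ ⇑f u x =
      Complex.exp (Complex.I/(ℏ:ℂ) * ((ρ x : ℝ) : ℂ)) *
        opA A ℏ ⇑f (fun y => Complex.exp (-(Complex.I/(ℏ:ℂ)) * ((ρ y : ℝ) : ℂ)) * u y) x :=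
  gauge_covariance_general A hA ρ hρ ℏ f u x

end
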